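/- Let M_0, ..., M_k be n×n strictly diagonally dominant matrices whose s-th diagonal entries share the same sign for each s. Then for every tuple (D_0,...,D_k) of nonnegative diagonal matrices with entries in [0,1] summing to I, and for each ℓ ∈ {0,...,k}, ‖(Σ_{i=0}^k D_i M_i)^{-1} D_ℓ‖_∞ ≤ 1 / min_{j} (⟨M_ℓ⟩ e)_j. -/

import Mathlib

/-!
Write `A = ∑ Dᵢ Mᵢ` and `m(B)ₛ = (⟨B⟩e)ₛ = |Bₛₛ| - ∑_{t ≠ s} |Bₛₜ|` for the row dominance
margin. Because the diagonal entries `(Mᵢ)ₛₛ` share a sign, no cancellation occurs on the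
diagonal of `A`, so `m(A)ₛ ≥ ∑ᵢ (Dᵢ)ₛ m(Mᵢ)ₛ ≥ (D_ℓ)ₛ r` with `r = minⱼ m(M_ℓ)ⱼ`; in
particular `A` is strictly diagonally dominant. If `A y = D_ℓ x` and `|yₛ|` is maximal, then
`m(A)ₛ |yₛ| ≤ |(A y)ₛ| ≤ (D_ℓ)ₛ ‖x‖∞ ≤ m(A)ₛ ‖x‖∞ / r`, hence `‖A⁻¹ D_ℓ‖∞ ≤ 1 / r`.
-/

open Matrix

attribute [local instance] Matrix.linftyOpNormedRing

/-- Strict diagonal dominance. -/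
def SDD {n : ℕ} (A : Matrix (Fin n) (Fin n) ℝ) : Prop :=
  ∀ s, ∑ t ∈ Finset.univ.erase s, |A s t| < |A s s|

/-- The comparison matrix `⟨A⟩`. -/
def cmpMat {n : ℕ} (A : Matrix (Fin n) (Fin n) ℝ) : Matrix (Fin n) (Fin n) ℝ :=
  fun s t => if s = t then |A s s| else -|A s t|

theorem Matrix.linfty_opNorm_le_of_mulVec {n : Type*} [Fintype n] [DecidableEq n]
    (B : Matrix n n ℝ) {C : ℝ} (hC : 0 ≤ C) (hB : ∀ x, ‖B *ᵥ x‖ ≤ C * ‖x‖) : ‖B‖ ≤ C := by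
  rw [linfty_opNorm_eq_opNorm]
  exact ContinuousLinearMap.opNorm_le_bound _ hC hB

section ComparisonMatrix

variable {n : ℕ}

theorem cmpMat_mulVec_one_apply (A : Matrix (Fin n) (Fin n) ℝ) (s : Fin n) :
    (cmpMat A *ᵥ fun _ => 1) s = |A s s| - ∑ t ∈ Finset.univ.erase s, |A s t| := by
  simp only [mulVec, dotProduct, mul_one]
  rw [← Finset.add_sum_erase _ _ (Finset.mem_univ s), sub_eq_add_neg, ← Finset.sum_neg_distrib]
  congr 1
  · simp [cmpMat]
  · exact Finset.sum_congr rfl fun t ht => if_neg (Finset.ne_of_mem_erase ht).symm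

theorem sdd_iff_cmpMat_mulVec_one_pos (A : Matrix (Fin n) (Fin n) ℝ) :
    SDD A ↔ ∀ s, 0 < (cmpMat A *ᵥ fun _ => 1) s := by
  simp only [SDD, cmpMat_mulVec_one_apply, sub_pos]

theorem cmpMat_mulVec_one_mul_abs_le {A : Matrix (Fin n) (Fin n) ℝ} {y : Fin n → ℝ} {s : Fin n}
    (hs : ∀ t, |y t| ≤ |y s|) :
    (cmpMat A *ᵥ fun _ => 1) s * |y s| ≤ |(A *ᵥ y) s| := by
  have hoff : |∑ t ∈ Finset.univ.erase s, A s t * y t|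
      ≤ (∑ t ∈ Finset.univ.erase s, |A s t|) * |y s| := by
    rw [Finset.sum_mul]
    refine (Finset.abs_sum_le_sum_abs _ _).trans (Finset.sum_le_sum fun t _ => ?_)
    rw [abs_mul]
    exact mul_le_mul_of_nonneg_left (hs t) (abs_nonneg _)
  have hsplit : (A *ᵥ y) s = A s s * y s + ∑ t ∈ Finset.univ.erase s, A s t * y t :=
    (Finset.add_sum_erase _ _ (Finset.mem_univ s)).symm
  have hdiag := abs_sub (A s s * y s + ∑ t ∈ Finset.univ.erase s, A s t * y t)
    (∑ t ∈ Finset.univ.erase s, A s t * y t)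
  rw [add_sub_cancel_right] at hdiag
  rw [cmpMat_mulVec_one_apply, sub_mul, hsplit, ← abs_mul]
  linarith

theorem SDD.isUnit_det {A : Matrix (Fin n) (Fin n) ℝ} (hA : SDD A) : IsUnit A.det :=
  isUnit_iff_ne_zero.2 <| det_ne_zero_of_sum_row_lt_diag <| by
    simp only [Real.norm_eq_abs]
    exact hA

theorem SDD.norm_inv_mul_diagonal_le {A : Matrix (Fin n) (Fin n) ℝ} (hA : SDD A)
    {d : Fin n → ℝ} {C : ℝ} (hC : 0 ≤ C) (hd : ∀ s, |d s| ≤ C * (cmpMat A *ᵥ fun _ => 1) s) :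
    ‖A⁻¹ * diagonal d‖ ≤ C := by
  refine linfty_opNorm_le_of_mulVec _ hC fun x => ?_
  set y := (A⁻¹ * diagonal d) *ᵥ x
  have hAy : A *ᵥ y = diagonal d *ᵥ x := by
    rw [mulVec_mulVec, ← Matrix.mul_assoc, mul_nonsing_inv _ hA.isUnit_det, Matrix.one_mul]
  refine (pi_norm_le_iff_of_nonneg (by positivity)).2 fun s => ?_
  have : Nonempty (Fin n) := ⟨s⟩
  obtain ⟨s₀, hs₀⟩ := Finite.exists_max fun t => |y t|
  have hpos := (sdd_iff_cmpMat_mulVec_one_pos A).1 hA s₀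
  have key : (cmpMat A *ᵥ fun _ => 1) s₀ * |y s₀|
      ≤ (cmpMat A *ᵥ fun _ => 1) s₀ * (C * ‖x‖) := by
    calc (cmpMat A *ᵥ fun _ => 1) s₀ * |y s₀|
        ≤ |(A *ᵥ y) s₀| := cmpMat_mulVec_one_mul_abs_le hs₀
      _ = |d s₀| * |x s₀| := by rw [hAy, mulVec_diagonal, abs_mul]
      _ ≤ C * (cmpMat A *ᵥ fun _ => 1) s₀ * ‖x‖ :=
          mul_le_mul (hd s₀) (norm_le_pi_norm x s₀) (abs_nonneg _) (by positivity)
      _ = _ := by ring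
  exact (hs₀ s).trans (le_of_mul_le_mul_left key hpos)

theorem sum_diagonal_mul_apply {ι : Type*} [Fintype ι] (M : ι → Matrix (Fin n) (Fin n) ℝ)
    (d : ι → Fin n → ℝ) (s t : Fin n) :
    (∑ i, diagonal (d i) * M i) s t = ∑ i, d i s * M i s t := by
  simp only [Matrix.sum_apply, diagonal_mul]

theorem sum_mul_cmpMat_mulVec_one_le {ι : Type*} [Fintype ι]
    (M : ι → Matrix (Fin n) (Fin n) ℝ) {d : ι → Fin n → ℝ} (hd : ∀ i s, 0 ≤ d i s) {s : Fin n}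
    (hsign : (∀ i, 0 ≤ M i s s) ∨ (∀ i, M i s s ≤ 0)) :
    ∑ i, d i s * (cmpMat (M i) *ᵥ fun _ => 1) s
      ≤ (cmpMat (∑ i, diagonal (d i) * M i) *ᵥ fun _ => 1) s := by
  have hdiag : |∑ i, d i s * M i s s| = ∑ i, d i s * |M i s s| := by
    rcases hsign with hp | hn
    · rw [abs_of_nonneg (Finset.sum_nonneg fun i _ => mul_nonneg (hd i s) (hp i))]
      exact Finset.sum_congr rfl fun i _ => by rw [abs_of_nonneg (hp i)]
    · rw [abs_of_nonpos (Finset.sum_nonpos fun i _ =>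
          mul_nonpos_of_nonneg_of_nonpos (hd i s) (hn i)), ← Finset.sum_neg_distrib]
      exact Finset.sum_congr rfl fun i _ => by rw [abs_of_nonpos (hn i), mul_neg]
  have hoff : ∑ t ∈ Finset.univ.erase s, |∑ i, d i s * M i s t|
      ≤ ∑ i, d i s * ∑ t ∈ Finset.univ.erase s, |M i s t| := by
    simp_rw [Finset.mul_sum]
    rw [Finset.sum_comm]
    refine Finset.sum_le_sum fun t _ => (Finset.abs_sum_le_sum_abs _ _).trans_eq ?_
    simp_rw [abs_mul, abs_of_nonneg (hd _ s)]
  simp only [cmpMat_mulVec_one_apply, sum_diagonal_mul_apply, hdiag, mul_sub,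
    Finset.sum_sub_distrib]
  linarith

theorem SDD.sum_diagonal_mul {ι : Type*} [Fintype ι] {M : ι → Matrix (Fin n) (Fin n) ℝ}
    (hM : ∀ i, SDD (M i)) (hsign : ∀ s, (∀ i, 0 ≤ M i s s) ∨ (∀ i, M i s s ≤ 0))
    {d : ι → Fin n → ℝ} (hd : ∀ i s, 0 ≤ d i s) (hsum : ∀ s, ∑ i, d i s = 1) :
    SDD (∑ i, diagonal (d i) * M i) := by
  refine (sdd_iff_cmpMat_mulVec_one_pos _).2 fun s =>
    lt_of_lt_of_le ?_ (sum_mul_cmpMat_mulVec_one_le M hd (hsign s))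
  obtain ⟨i, -, hi⟩ := Finset.exists_lt_of_sum_lt (s := Finset.univ) (f := 0)
    (g := fun i => d i s) (by simp [hsum s])
  have hmarg := fun i => (sdd_iff_cmpMat_mulVec_one_pos _).1 (hM i) s
  exact Finset.sum_pos' (fun i _ => mul_nonneg (hd i s) (hmarg i).le)
    ⟨i, Finset.mem_univ i, mul_pos hi (hmarg i)⟩

end ComparisonMatrix

theorem stmt_9 (n k : ℕ) (M : Fin (k+1) → Matrix (Fin n) (Fin n) ℝ)
    (hsdd : ∀ i, SDD (M i))
    (hsign : ∀ s, (∀ i, 0 < M i s s) ∨ (∀ i, M i s s < 0))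
    (d : Fin (k+1) → Fin n → ℝ)
    (hd : ∀ i s, d i s ∈ Set.Icc (0:ℝ) 1) (hsum : ∀ s, ∑ i, d i s = 1)
    (ℓ : Fin (k+1)) :
    ‖(∑ i, Matrix.diagonal (d i) * M i)⁻¹ * Matrix.diagonal (d ℓ)‖ ≤
      1 / ⨅ j, (cmpMat (M ℓ) *ᵥ fun _ => (1:ℝ)) j := by
  have hd₀ : ∀ i s, 0 ≤ d i s := fun i s => (hd i s).1
  have hsign' : ∀ s, (∀ i, 0 ≤ M i s s) ∨ (∀ i, M i s s ≤ 0) :=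
    fun s => (hsign s).imp (fun h i => (h i).le) fun h i => (h i).le
  have hmarg : ∀ i s, 0 < (cmpMat (M i) *ᵥ fun _ => 1) s :=
    fun i => (sdd_iff_cmpMat_mulVec_one_pos _).1 (hsdd i)
  refine (SDD.sum_diagonal_mul hsdd hsign' hd₀ hsum).norm_inv_mul_diagonal_le
    (one_div_nonneg.2 (Real.iInf_nonneg fun j => (hmarg ℓ j).le)) fun s => ?_
  have : Nonempty (Fin n) := ⟨s⟩
  obtain ⟨j, hj⟩ :=
    exists_eq_ciInf_of_finite (f := fun j => (cmpMat (M ℓ) *ᵥ fun _ => (1:ℝ)) j)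
  rw [abs_of_nonneg (hd₀ ℓ s), one_div_mul_eq_div, le_div_iff₀ (hj ▸ hmarg ℓ j)]
  calc d ℓ s * ⨅ j, (cmpMat (M ℓ) *ᵥ fun _ => (1:ℝ)) j
      ≤ d ℓ s * (cmpMat (M ℓ) *ᵥ fun _ => 1) s :=
        mul_le_mul_of_nonneg_left (ciInf_le (Finite.bddBelow_range _) s) (hd₀ ℓ s)
    _ ≤ ∑ i, d i s * (cmpMat (M i) *ᵥ fun _ => 1) s :=
        Finset.single_le_sum (fun i _ => mul_nonneg (hd₀ i s) (hmarg i s).le)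
          (Finset.mem_univ ℓ)
    _ ≤ _ := sum_mul_cmpMat_mulVec_one_le M hd₀ (hsign' s)
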